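/- arXiv:1311.3726 — 2 statements merged into one kernel-verified Lean document; each statement's English description precedes it below -/
import Mathlib

section
/- For every λ ∈ [0,∞)^m, every feasible point z of program (lw) for the polynomial G(λ), and every x̄ ∈ K_g, one has f(x̄) ≥ G(λ)(0) − v(z). Consequently G(λ)_gp ≤ f(x̄) for all x̄ ∈ K_g and all λ ∈ [0,∞)^m, so s(f,g) ≤ inf{f(x̄) : x̄ ∈ K_g}. -/
open MvPolynomial Finset

noncomputable section

/-- `Finset.filter` with classical decidability. -/
def pfilter {β : Type*} (s : Finset β) (q : β → Prop) : Finset β :=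
  @Finset.filter β q (fun _ => Classical.propDecidable _) s

/-- `|α| := α₁ + ⋯ + αₙ` for a multi-index `α`. -/
def adeg {n : ℕ} (α : Fin n →₀ ℕ) : ℕ := ∑ i, α i

/-- `Ω(p) := {α : |α| ≤ d, p_α ≠ 0, α ∉ {0, ε₁, …, εₙ}}`. -/
def OmegaSet {n : ℕ} (d : ℕ) (p : MvPolynomial (Fin n) ℝ) : Finset (Fin n →₀ ℕ) :=
  pfilter p.support (fun α => adeg α ≤ d ∧ α ≠ 0 ∧ ∀ i, α ≠ Finsupp.single i d)

/-- `Δ(p) := {α ∈ Ω(p) : p_α x^α is not a square}`. -/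
def DelSet {n : ℕ} (d : ℕ) (p : MvPolynomial (Fin n) ℝ) : Finset (Fin n →₀ ℕ) :=
  pfilter (OmegaSet d p)
    (fun α => ¬ IsSquare ((monomial α (p.coeff α)) : MvPolynomial (Fin n) ℝ))

/-- Feasibility for program (lw) for `p`. -/
def LwFeas {n : ℕ} (d : ℕ) (p : MvPolynomial (Fin n) ℝ)
    (z : (Fin n →₀ ℕ) → Fin n → ℝ) : Prop :=
  (∀ α ∈ DelSet d p, ∀ i, 0 ≤ z α i ∧ (z α i = 0 ↔ α i = 0)) ∧
  (∀ i, ∑ α ∈ DelSet d p, z α i ≤ p.coeff (Finsupp.single i d)) ∧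
  (∀ α ∈ DelSet d p, adeg α = d →
    ∏ i, (z α i / (α i : ℝ)) ^ (α i) = (p.coeff α / (d : ℝ)) ^ d)

/-- The objective function `v` of program (lw). -/
def lwObj {n : ℕ} (d : ℕ) (p : MvPolynomial (Fin n) ℝ)
    (z : (Fin n →₀ ℕ) → Fin n → ℝ) : ℝ :=
  ∑ α ∈ pfilter (DelSet d p) (fun α => adeg α < d),
    ((d : ℝ) - (adeg α : ℝ)) *
      (((p.coeff α / (d : ℝ)) ^ d * ∏ i, ((α i : ℝ) / z α i) ^ (α i)) ^
        ((1 : ℝ) / ((d : ℝ) - (adeg α : ℝ))))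

/-- `ρ(p) ∈ [0,∞]`, the infimum of `v` over the feasible set (`⊤` if infeasible). -/
def lwRho {n : ℕ} (d : ℕ) (p : MvPolynomial (Fin n) ℝ) : EReal :=
  sInf ((fun z => ((lwObj d p z : ℝ) : EReal)) '' {z | LwFeas d p z})

/-- `p_gp := p(0) − ρ(p) ∈ ℝ ∪ {−∞}`. -/
def lwGp {n : ℕ} (d : ℕ) (p : MvPolynomial (Fin n) ℝ) : EReal :=
  ((eval (0 : Fin n → ℝ) p : ℝ) : EReal) - lwRho d p

/-- `G(λ) := f − ∑ⱼ λⱼ gⱼ`. -/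
def polyG {n m : ℕ} (f : MvPolynomial (Fin n) ℝ) (g : Fin m → MvPolynomial (Fin n) ℝ)
    (lam : Fin m → ℝ) : MvPolynomial (Fin n) ℝ :=
  f - ∑ j, C (lam j) * g j

/-- `s(f,g) := sup{G(λ)_gp : λ ∈ [0,∞)^m}`. -/
def sBound {n m : ℕ} (d : ℕ) (f : MvPolynomial (Fin n) ℝ)
    (g : Fin m → MvPolynomial (Fin n) ℝ) : EReal :=
  sSup ((fun lam => lwGp d (polyG f g lam)) '' {lam : Fin m → ℝ | ∀ j, 0 ≤ lam j})



/-!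
Fix `α ∈ Δ(p)` and let `t_α ≥ 0` be the number whose multiple `(d - |α|) t_α` is the term of
`v(z)` belonging to `α` (`t_α = 0` when `|α| = d`). The constraints of (lw) say precisely that
`t_α ^ (d - |α|) * ∏ᵢ (z_{α,i} / αᵢ) ^ αᵢ = (p_α / d) ^ d`, so the weighted AM–GM inequality with
weights `(d - |α|)/d` and `αᵢ/d`, applied to `d t_α` and the `d z_{α,i} xᵢ^d / αᵢ`, gives
`|p_α x^α| ≤ ∑ᵢ z_{α,i} xᵢ^d + (d - |α|) t_α`. Summing over `Δ(p)`, the pure powers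
`p_{d,i} xᵢ^d ≥ ∑_α z_{α,i} xᵢ^d` absorb the first parts and the square terms of `Ω(p) \ Δ(p)` are
nonnegative, hence `p(x) ≥ p(0) - v(z)` for every `x`. Finally `G(λ) ≤ f` on `K_g` when `λ ≥ 0`.
-/

theorem Real.prod_pow_le_mean_pow {ι : Type*} [Fintype ι] (k : ι → ℕ) {d : ℕ} (hd : d ≠ 0)
    (hkd : ∑ i, k i = d) {u : ι → ℝ} (hu : ∀ i, 0 ≤ u i) :
    ∏ i, u i ^ k i ≤ ((∑ i, k i * u i) / d) ^ d := by
  have hd' : (d : ℝ) ≠ 0 := Nat.cast_ne_zero.2 hd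
  have hgm := Real.geom_mean_le_arith_mean_weighted univ (fun i => (k i : ℝ) / d) u
    (fun i _ => by positivity)
    (by rw [← sum_div, ← Nat.cast_sum, hkd, div_self hd'])
    (fun i _ => hu i)
  calc ∏ i, u i ^ k i = (∏ i, u i ^ ((k i : ℝ) / d)) ^ d := by
        rw [← prod_pow]
        refine prod_congr rfl fun i _ => ?_
        rw [← Real.rpow_natCast _ d, ← Real.rpow_mul (hu i), div_mul_cancel₀ _ hd',
          Real.rpow_natCast]
    _ ≤ (∑ i, (k i : ℝ) / d * u i) ^ d :=
        pow_le_pow_left₀ (prod_nonneg fun i _ => Real.rpow_nonneg (hu i) _) hgm d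
    _ = ((∑ i, k i * u i) / d) ^ d := by
        rw [sum_div]
        congr 1
        exact sum_congr rfl fun i _ => by ring

theorem abs_mul_prod_pow_le {ι : Type*} [Fintype ι] {d : ℕ} (hd : d ≠ 0) (hde : Even d)
    {α : ι → ℕ} (hα : ∑ i, α i ≤ d) {c t : ℝ} (ht : 0 ≤ t) {z : ι → ℝ} (hz : ∀ i, 0 ≤ z i)
    (hct : t ^ (d - ∑ i, α i) * ∏ i, (z i / α i) ^ α i = (c / d) ^ d) (x : ι → ℝ) :
    |c * ∏ i, x i ^ α i| ≤ ∑ i, z i * x i ^ d + ((d : ℝ) - (∑ i, α i : ℕ)) * t := by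
  have hd' : (d : ℝ) ≠ 0 := Nat.cast_ne_zero.2 hd
  have hxd : ∀ i, 0 ≤ x i ^ d := fun i => hde.pow_nonneg _
  -- For `α i = 0` the division below is `0`, and so is its weight.
  set u : Option ι → ℝ := fun o => o.elim (d * t) fun i => d * z i * x i ^ d / α i
  set k : Option ι → ℕ := fun o => o.elim (d - ∑ i, α i) α
  have hu : ∀ o, 0 ≤ u o := by
    rintro (_ | i)
    · exact mul_nonneg (Nat.cast_nonneg _) ht
    · exact div_nonneg (mul_nonneg (mul_nonneg (Nat.cast_nonneg _) (hz i)) (hxd i))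
        (Nat.cast_nonneg _)
  have hkd : ∑ o, k o = d := by
    rw [Fintype.sum_option]
    exact Nat.sub_add_cancel hα
  have hgm : ∏ o, u o ^ k o = |c * ∏ i, x i ^ α i| ^ d := by
    have hterm : ∀ i, (d * z i * x i ^ d / α i) ^ α i
        = (d : ℝ) ^ α i * ((z i / α i) ^ α i * (x i ^ α i) ^ d) := by
      intro i
      rw [← pow_mul, mul_comm (α i) d, pow_mul, ← mul_pow, ← mul_pow]
      congr 1
      ring
    rw [Fintype.prod_option, hde.pow_abs]
    change (d * t) ^ (d - ∑ i, α i) * ∏ i, (d * z i * x i ^ d / α i) ^ α i = _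
    rw [prod_congr rfl fun i _ => hterm i, prod_mul_distrib, prod_mul_distrib,
      prod_pow_eq_pow_sum, prod_pow]
    calc (d * t) ^ (d - ∑ i, α i) * ((d : ℝ) ^ (∑ i, α i) *
          ((∏ i, (z i / α i) ^ α i) * (∏ i, x i ^ α i) ^ d))
        = (d : ℝ) ^ (d - ∑ i, α i + ∑ i, α i) *
          (t ^ (d - ∑ i, α i) * ∏ i, (z i / α i) ^ α i) * (∏ i, x i ^ α i) ^ d := by ring
      _ = (c * ∏ i, x i ^ α i) ^ d := by
        rw [Nat.sub_add_cancel hα, hct, ← mul_pow, mul_div_cancel₀ _ hd', mul_pow]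
  have hsome : ∀ i, (α i : ℝ) * u (some i) ≤ d * (z i * x i ^ d) := by
    intro i
    change (α i : ℝ) * (d * z i * x i ^ d / α i) ≤ _
    rcases eq_or_ne (α i) 0 with h | h
    · rw [h, Nat.cast_zero, zero_mul]
      exact mul_nonneg (Nat.cast_nonneg _) (mul_nonneg (hz i) (hxd i))
    · rw [mul_div_cancel₀ _ (Nat.cast_ne_zero.2 h), mul_assoc]
  have hnone : (k none : ℝ) * u none = d * (((d : ℝ) - (∑ i, α i : ℕ)) * t) := by
    change ((d - ∑ i, α i : ℕ) : ℝ) * (d * t) = _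
    rw [Nat.cast_sub hα]
    ring
  have ham : (∑ o, k o * u o) / d ≤ ∑ i, z i * x i ^ d + ((d : ℝ) - (∑ i, α i : ℕ)) * t :=
    calc (∑ o, k o * u o) / d = (k none * u none + ∑ i, α i * u (some i)) / d := by
          rw [Fintype.sum_option]
          rfl
      _ ≤ (d * (((d : ℝ) - (∑ i, α i : ℕ)) * t) + ∑ i, d * (z i * x i ^ d)) / d := by
          rw [hnone]
          gcongr (_ + ?_) / _
          exact sum_le_sum fun i _ => hsome i
      _ = _ := by rw [← mul_sum, ← mul_add, mul_div_cancel_left₀ _ hd', add_comm]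
  refine le_of_pow_le_pow_left₀ hd (add_nonneg (sum_nonneg fun i _ => mul_nonneg (hz i) (hxd i))
    (mul_nonneg (by rw [sub_nonneg]; exact_mod_cast hα) ht)) ?_
  rw [← hgm]
  exact (Real.prod_pow_le_mean_pow k hd hkd hu).trans
    (pow_le_pow_left₀ (div_nonneg (sum_nonneg fun o _ => mul_nonneg (Nat.cast_nonneg _) (hu o))
      (Nat.cast_nonneg _)) ham d)

theorem pfilter_eq_filter {β : Type*} (s : Finset β) (q : β → Prop) [DecidablePred q] :
    pfilter s q = s.filter q := by
  unfold pfilter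
  congr!

theorem adeg_le_of_mem_support {R : Type*} [CommSemiring R] {n d : ℕ}
    {p : MvPolynomial (Fin n) R} (hp : p.totalDegree ≤ d) {α : Fin n →₀ ℕ}
    (hα : α ∈ p.support) : adeg α ≤ d := by
  rw [adeg, ← Finsupp.sum_fintype α (fun _ e => e) fun _ => rfl]
  exact (le_totalDegree hα).trans hp

section Lw

variable {n d : ℕ} {p : MvPolynomial (Fin n) ℝ}

theorem eval_eq_coeff_zero_add_sum_add_sum_omegaSet (hd : d ≠ 0) (hp : p.totalDegree ≤ d)
    (x : Fin n → ℝ) :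
    eval x p = p.coeff 0 + ∑ i, p.coeff (Finsupp.single i d) * x i ^ d +
      ∑ α ∈ OmegaSet d p, p.coeff α * ∏ i, x i ^ α i := by
  classical
  set E : Finset (Fin n →₀ ℕ) := insert 0 (univ.image fun i => Finsupp.single i d)
  have hΩ : OmegaSet d p = p.support.filter (· ∉ E) := by
    ext α
    simp only [OmegaSet, pfilter_eq_filter, mem_filter, E, mem_insert, mem_image, mem_univ,
      true_and, not_or, not_exists]
    constructor
    · rintro ⟨hα, -, h0, hs⟩
      exact ⟨hα, h0, fun i h => hs i h.symm⟩
    · rintro ⟨hα, h0, hs⟩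
      exact ⟨hα, adeg_le_of_mem_support hp hα, h0, fun i h => hs i h.symm⟩
  have hE : ∑ α ∈ p.support.filter (· ∈ E), p.coeff α * ∏ i, x i ^ α i
      = p.coeff 0 + ∑ i, p.coeff (Finsupp.single i d) * x i ^ d := by
    rw [filter_mem_eq_inter, sum_subset inter_subset_right fun α _ hα => by
      rw [notMem_support_iff.1 fun h => hα (mem_inter.2 ⟨h, ‹_›⟩), zero_mul]]
    rw [sum_insert (by simp [hd]), sum_image fun i _ j _ h =>
      Finsupp.single_left_injective hd h]
    simp [Finsupp.single_apply, pow_ite]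
  rw [eval_eq', ← sum_filter_add_sum_filter_not p.support (· ∈ E), hE, hΩ]

theorem sum_delSet_le_sum_omegaSet (x : Fin n → ℝ) :
    ∑ α ∈ DelSet d p, p.coeff α * ∏ i, x i ^ α i
      ≤ ∑ α ∈ OmegaSet d p, p.coeff α * ∏ i, x i ^ α i := by
  classical
  rw [DelSet, pfilter_eq_filter]
  refine sum_le_sum_of_subset_of_nonneg (filter_subset _ _) fun α hΩ hΔ => ?_
  have hsq : IsSquare (monomial α (p.coeff α)) := by
    simpa [hΩ] using hΔ
  simpa [eval_monomial, Finsupp.prod_fintype] using (hsq.map (eval x)).nonneg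

def lwRoot (d : ℕ) (p : MvPolynomial (Fin n) ℝ) (z : (Fin n →₀ ℕ) → Fin n → ℝ)
    (α : Fin n →₀ ℕ) : ℝ :=
  if adeg α < d then
    ((p.coeff α / d) ^ d * ∏ i, ((α i : ℝ) / z α i) ^ α i) ^ ((1 : ℝ) / ((d : ℝ) - adeg α))
  else 0

variable {z : (Fin n →₀ ℕ) → Fin n → ℝ}

theorem lwObj_eq_sum_lwRoot :
    lwObj d p z = ∑ α ∈ DelSet d p, ((d : ℝ) - adeg α) * lwRoot d p z α := by
  classical
  rw [lwObj, pfilter_eq_filter, sum_filter]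
  refine sum_congr rfl fun α _ => ?_
  rw [lwRoot, mul_ite, mul_zero]

theorem adeg_le_of_mem_delSet {α : Fin n →₀ ℕ} (hα : α ∈ DelSet d p) : adeg α ≤ d := by
  classical
  simp only [DelSet, OmegaSet, pfilter_eq_filter, mem_filter] at hα
  exact hα.1.2.1

theorem lwRoot_nonneg (hde : Even d) {α : Fin n →₀ ℕ} (hz : ∀ i, 0 ≤ z α i) :
    0 ≤ lwRoot d p z α := by
  unfold lwRoot
  split_ifs
  · exact Real.rpow_nonneg (mul_nonneg (hde.pow_nonneg _)
      (prod_nonneg fun i _ => pow_nonneg (div_nonneg (Nat.cast_nonneg _) (hz i)) _)) _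
  · exact le_rfl

theorem lwRoot_pow_mul_prod (hde : Even d) (hz : LwFeas d p z) {α : Fin n →₀ ℕ}
    (hα : α ∈ DelSet d p) :
    lwRoot d p z α ^ (d - adeg α) * ∏ i, (z α i / α i) ^ α i = (p.coeff α / d) ^ d := by
  obtain ⟨hz₀, -, hzd⟩ := hz
  rcases (adeg_le_of_mem_delSet hα).lt_or_eq with hlt | heq
  · have hB : 0 ≤ (p.coeff α / d) ^ d * ∏ i, ((α i : ℝ) / z α i) ^ α i :=
      mul_nonneg (hde.pow_nonneg _)
        (prod_nonneg fun i _ => pow_nonneg (div_nonneg (Nat.cast_nonneg _) (hz₀ α hα i).1) _)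
    have hsub : ((d - adeg α : ℕ) : ℝ) = (d : ℝ) - adeg α := Nat.cast_sub hlt.le
    have hinv : (∏ i, ((α i : ℝ) / z α i) ^ α i) * ∏ i, (z α i / α i) ^ α i = 1 := by
      rw [← prod_mul_distrib]
      refine prod_eq_one fun i _ => ?_
      rcases eq_or_ne (α i) 0 with h | h
      · rw [h, pow_zero, pow_zero, mul_one]
      · have hzi : z α i ≠ 0 := fun h' => h (((hz₀ α hα i).2).1 h')
        rw [← mul_pow, div_mul_div_comm, mul_comm (α i : ℝ),
          div_self (mul_ne_zero hzi (Nat.cast_ne_zero.2 h)), one_pow]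
    rw [lwRoot, if_pos hlt, ← Real.rpow_natCast, ← Real.rpow_mul hB, hsub,
      one_div_mul_cancel (sub_ne_zero.2 (by exact_mod_cast hlt.ne')), Real.rpow_one, mul_assoc,
      hinv, mul_one]
  · rw [lwRoot, if_neg heq.not_lt, heq, Nat.sub_self, pow_zero, one_mul, hzd α hα heq]

theorem neg_le_coeff_mul_prod_of_mem_delSet (hd : d ≠ 0) (hde : Even d) (hz : LwFeas d p z)
    {α : Fin n →₀ ℕ} (hα : α ∈ DelSet d p) (x : Fin n → ℝ) :
    -(∑ i, z α i * x i ^ d + ((d : ℝ) - adeg α) * lwRoot d p z α)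
      ≤ p.coeff α * ∏ i, x i ^ α i :=
  (neg_le_neg <| abs_mul_prod_pow_le hd hde (adeg_le_of_mem_delSet hα)
      (lwRoot_nonneg hde fun i => (hz.1 α hα i).1) (fun i => (hz.1 α hα i).1)
      (lwRoot_pow_mul_prod hde hz hα) x).trans (neg_abs_le _)

theorem eval_zero_sub_lwObj_le_eval (hd : d ≠ 0) (hde : Even d) (hp : p.totalDegree ≤ d)
    (hz : LwFeas d p z) (x : Fin n → ℝ) :
    eval 0 p - lwObj d p z ≤ eval x p := by
  have hΔ : -∑ α ∈ DelSet d p, ((d : ℝ) - adeg α) * lwRoot d p z α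
      ≤ ∑ i, (∑ α ∈ DelSet d p, z α i) * x i ^ d
        + ∑ α ∈ DelSet d p, p.coeff α * ∏ i, x i ^ α i := by
    simp only [sum_mul]
    rw [sum_comm, neg_le_iff_add_nonneg', ← sum_add_distrib, ← sum_add_distrib]
    refine sum_nonneg fun α hα => ?_
    linarith [neg_le_coeff_mul_prod_of_mem_delSet hd hde hz hα x]
  have hpure : ∑ i, (∑ α ∈ DelSet d p, z α i) * x i ^ d
      ≤ ∑ i, p.coeff (Finsupp.single i d) * x i ^ d :=
    sum_le_sum fun i _ => mul_le_mul_of_nonneg_right (hz.2.1 i) (hde.pow_nonneg _)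
  rw [eval_eq_coeff_zero_add_sum_add_sum_omegaSet hd hp x, lwObj_eq_sum_lwRoot, eval_zero,
    constantCoeff_eq]
  linarith [sum_delSet_le_sum_omegaSet (d := d) (p := p) x]

theorem lwGp_le_of_forall_lwFeas {a : ℝ}
    (h : ∀ z, LwFeas d p z → eval 0 p - lwObj d p z ≤ a) :
    lwGp d p ≤ a := by
  refine EReal.sub_le_of_le_add ?_
  have hρ : ((eval 0 p - a : ℝ) : EReal) ≤ lwRho d p :=
    le_sInf <| by
      rintro _ ⟨z, hz, rfl⟩
      exact EReal.coe_le_coe_iff.2 (by linarith [h z hz])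
  calc ((eval 0 p : ℝ) : EReal) = (a : EReal) + ((eval 0 p - a : ℝ) : EReal) := by
        rw [← EReal.coe_add, add_sub_cancel]
    _ ≤ a + lwRho d p := by gcongr

end Lw

section Lagrangian

variable {n m d : ℕ} {f : MvPolynomial (Fin n) ℝ} {g : Fin m → MvPolynomial (Fin n) ℝ}
  {lam : Fin m → ℝ}

theorem totalDegree_polyG_le (hf : f.totalDegree ≤ d) (hg : ∀ j, (g j).totalDegree ≤ d) :
    (polyG f g lam).totalDegree ≤ d := by
  refine (totalDegree_sub _ _).trans (max_le hf ((totalDegree_finsetSum _ _).trans ?_))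
  refine Finset.sup_le fun j _ => (totalDegree_mul _ _).trans ?_
  rw [totalDegree_C, zero_add]
  exact hg j

theorem eval_polyG_le (hlam : ∀ j, 0 ≤ lam j) {x : Fin n → ℝ} (hx : ∀ j, 0 ≤ eval x (g j)) :
    eval x (polyG f g lam) ≤ eval x f := by
  simp only [polyG, map_sub, map_sum, map_mul, eval_C, sub_le_self_iff]
  exact sum_nonneg fun j _ => mul_nonneg (hlam j) (hx j)

end Lagrangian

theorem stmt1_general {n m : ℕ} (d : ℕ)
    (f : MvPolynomial (Fin n) ℝ) (g : Fin m → MvPolynomial (Fin n) ℝ)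
    (hd2 : 2 ≤ d) (hde : Even d) (hdf : f.totalDegree ≤ d)
    (hdg : ∀ j, (g j).totalDegree ≤ d) :
    (∀ lam : Fin m → ℝ, (∀ j, 0 ≤ lam j) →
      ∀ z, LwFeas d (polyG f g lam) z →
      ∀ x : Fin n → ℝ, (∀ j, 0 ≤ eval x (g j)) →
        eval (0 : Fin n → ℝ) (polyG f g lam) - lwObj d (polyG f g lam) z ≤ eval x f) ∧
    (∀ lam : Fin m → ℝ, (∀ j, 0 ≤ lam j) →
      ∀ x : Fin n → ℝ, (∀ j, 0 ≤ eval x (g j)) →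
        lwGp d (polyG f g lam) ≤ ((eval x f : ℝ) : EReal)) ∧
    (∀ x : Fin n → ℝ, (∀ j, 0 ≤ eval x (g j)) →
      sBound d f g ≤ ((eval x f : ℝ) : EReal)) := by
  have weak_duality : ∀ lam : Fin m → ℝ, (∀ j, 0 ≤ lam j) → ∀ z, LwFeas d (polyG f g lam) z →
      ∀ x : Fin n → ℝ, (∀ j, 0 ≤ eval x (g j)) →
        eval 0 (polyG f g lam) - lwObj d (polyG f g lam) z ≤ eval x f :=
    fun lam hlam z hz x hx =>
      (eval_zero_sub_lwObj_le_eval (by omega) hde (totalDegree_polyG_le hdf hdg) hz x).trans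
        (eval_polyG_le hlam hx)
  have gp_le : ∀ lam : Fin m → ℝ, (∀ j, 0 ≤ lam j) → ∀ x : Fin n → ℝ,
      (∀ j, 0 ≤ eval x (g j)) → lwGp d (polyG f g lam) ≤ ((eval x f : ℝ) : EReal) :=
    fun lam hlam x hx => lwGp_le_of_forall_lwFeas fun z hz => weak_duality lam hlam z hz x hx
  refine ⟨weak_duality, gp_le, fun x hx => sSup_le ?_⟩
  rintro _ ⟨lam, hlam, rfl⟩
  exact gp_le lam hlam x hx

/-- For every `λ ∈ [0,∞)^m`, every feasible point `z` of (lw) for `G(λ)` and every `x̄ ∈ K_g`,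
`f(x̄) ≥ G(λ)(0) − v(z)`; consequently `G(λ)_gp ≤ f(x̄)` and `s(f,g) ≤ inf {f(x̄) : x̄ ∈ K_g}`. -/
theorem stmt1 {n m : ℕ} (hn : 1 ≤ n) (d : ℕ)
    (f : MvPolynomial (Fin n) ℝ) (g : Fin m → MvPolynomial (Fin n) ℝ)
    (hd2 : 2 ≤ d) (hde : Even d) (hdf : f.totalDegree ≤ d)
    (hdg : ∀ j, (g j).totalDegree ≤ d)
    (hdLeast : ∀ d' : ℕ, Even d' → 2 ≤ d' → f.totalDegree ≤ d' →
      (∀ j, (g j).totalDegree ≤ d') → d ≤ d') :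
    (∀ lam : Fin m → ℝ, (∀ j, 0 ≤ lam j) →
      ∀ z, LwFeas d (polyG f g lam) z →
      ∀ x : Fin n → ℝ, (∀ j, 0 ≤ eval x (g j)) →
        eval (0 : Fin n → ℝ) (polyG f g lam) - lwObj d (polyG f g lam) z ≤ eval x f) ∧
    (∀ lam : Fin m → ℝ, (∀ j, 0 ≤ lam j) →
      ∀ x : Fin n → ℝ, (∀ j, 0 ≤ eval x (g j)) →
        lwGp d (polyG f g lam) ≤ ((eval x f : ℝ) : EReal)) ∧
    (∀ x : Fin n → ℝ, (∀ j, 0 ≤ eval x (g j)) →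
      sBound d f g ≤ ((eval x f : ℝ) : EReal)) :=
  stmt1_general d f g hd2 hde hdf hdg
end
end

section
/- For every feasible point (z, λ) of program (lw1): the feasible set of program (lw) for G(λ) is nonempty, and f(0) − u(z,λ) ≤ G(λ)(0) − ρ(G(λ)) = G(λ)_gp. Consequently, with ρ ∈ [0,∞] the infimum of u over the feasible set of (lw1), f(0) − ρ ≤ s(f,g) (as elements of ℝ ∪ {±∞}). -/
open MvPolynomial Finset

noncomputable section

/-- `Δ := Δ(f) ∪ Δ(−g₁) ∪ ⋯ ∪ Δ(−g_m)`. -/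
def DelTot {n m : ℕ} (d : ℕ) (f : MvPolynomial (Fin n) ℝ)
    (g : Fin m → MvPolynomial (Fin n) ℝ) : Finset (Fin n →₀ ℕ) :=
  DelSet d f ∪ Finset.univ.biUnion (fun j => DelSet d (-(g j)))

/-- Feasibility for program (lw1). -/
def Lw1Feas {n m : ℕ} (d : ℕ) (f : MvPolynomial (Fin n) ℝ)
    (g : Fin m → MvPolynomial (Fin n) ℝ)
    (z : (Fin n →₀ ℕ) → Fin n → ℝ) (lam : Fin m → ℝ) : Prop :=
  (∀ j, 0 ≤ lam j) ∧
  (∀ α ∈ DelTot d f g, ∀ i, 0 ≤ z α i ∧ (z α i = 0 ↔ α i = 0)) ∧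
  (∀ i, ∑ α ∈ DelTot d f g, z α i ≤ (polyG f g lam).coeff (Finsupp.single i d)) ∧
  (∀ α ∈ DelTot d f g, adeg α = d →
    ((polyG f g lam).coeff α / (d : ℝ)) ^ d ≤ ∏ i, (z α i / (α i : ℝ)) ^ (α i))

/-- The objective function `u` of program (lw1). -/
def lw1Obj {n m : ℕ} (d : ℕ) (f : MvPolynomial (Fin n) ℝ)
    (g : Fin m → MvPolynomial (Fin n) ℝ)
    (z : (Fin n →₀ ℕ) → Fin n → ℝ) (lam : Fin m → ℝ) : ℝ :=
  (∑ j, lam j * eval (0 : Fin n → ℝ) (g j)) +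
  ∑ α ∈ pfilter (DelTot d f g) (fun α => adeg α < d),
    ((d : ℝ) - (adeg α : ℝ)) *
      ((((polyG f g lam).coeff α / (d : ℝ)) ^ d * ∏ i, ((α i : ℝ) / z α i) ^ (α i)) ^
        ((1 : ℝ) / ((d : ℝ) - (adeg α : ℝ))))

/-- The optimal value `ρ ∈ [0,∞]` of program (lw1) (`⊤` if infeasible). -/
def rho1 {n m : ℕ} (d : ℕ) (f : MvPolynomial (Fin n) ℝ)
    (g : Fin m → MvPolynomial (Fin n) ℝ) : EReal :=
  sInf ((fun t : ((Fin n →₀ ℕ) → Fin n → ℝ) × (Fin m → ℝ) =>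
      ((lw1Obj d f g t.1 t.2 : ℝ) : EReal)) '' {t | Lw1Feas d f g t.1 t.2})

/-!
Given a feasible point `(z, λ)` of (lw1), the support of `G(λ)` lies in the union of
those of `f, g₁, …, g_m`, so `Δ(G(λ)) ⊆ Δ` because `Ω = Δ` for each of them. Shrink
each `z_α` with `|α| = d` by the factor that turns the inequality
`∏ (z_{α,i}/α_i)^{α_i} ≥ (G(λ)_α/d)^d` into an equality; the factor is at most `1`, so the
budget constraints survive, and the remaining `z_α` are unchanged, so the objective of (lw)
at the new point is at most the sum part of `u(z, λ)`. This gives `G(λ)_gp ≥ f(0) − u(z, λ)`,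
and taking the infimum over (lw1) and the supremum over `λ` gives `f(0) − ρ ≤ s(f, g)`.
-/

lemma mem_pfilter {β : Type*} {s : Finset β} {q : β → Prop} {a : β} :
    a ∈ pfilter s q ↔ a ∈ s ∧ q a :=
  @Finset.mem_filter β q (fun _ => Classical.propDecidable _) s a

lemma EReal.coe_sub_sInf_le {a : ℝ} {S : Set EReal} {c : EReal}
    (h : ∀ b ∈ S, (a : EReal) - b ≤ c) : (a : EReal) - sInf S ≤ c := by
  rw [← EReal.le_of_forall_lt_iff_le]
  intro t hct
  have hS : ∀ b ∈ S, ((a - t : ℝ) : EReal) ≤ b := by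
    intro b hb
    have hab : (a : EReal) - b < t := (h b hb).trans_lt hct
    induction b using EReal.rec with
    | bot => simp at hab
    | coe b =>
      rw [← EReal.coe_sub, EReal.coe_lt_coe_iff] at hab
      exact EReal.coe_le_coe_iff.mpr (by linarith)
    | top => exact le_top
  calc (a : EReal) - sInf S ≤ (a : EReal) - ((a - t : ℝ) : EReal) :=
        EReal.sub_le_sub le_rfl (le_sInf hS)
    _ = t := by rw [← EReal.coe_sub, sub_sub_cancel]

section Monomials

variable {n : ℕ}

lemma prod_div_pow_pos {α : Fin n →₀ ℕ} {w : Fin n → ℝ}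
    (hw : ∀ i, 0 ≤ w i ∧ (w i = 0 ↔ α i = 0)) : 0 < ∏ i, (w i / α i) ^ α i := by
  refine prod_pos fun i _ => ?_
  rcases Nat.eq_zero_or_pos (α i) with h0 | hpos
  · simp [h0]
  · have hwi : 0 < w i := (hw i).1.lt_of_ne fun h => hpos.ne' ((hw i).2.mp h.symm)
    positivity

lemma prod_mul_div_pow (α : Fin n →₀ ℕ) (c : ℝ) (w : Fin n → ℝ) :
    ∏ i, (c * w i / α i) ^ α i = c ^ adeg α * ∏ i, (w i / α i) ^ α i := by
  simp only [mul_div_assoc, mul_pow, prod_mul_distrib, prod_pow_eq_pow_sum, adeg]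

end Monomials

section Lw

variable {n m d : ℕ}

lemma coeff_ne_zero_of_mem_DelSet {p : MvPolynomial (Fin n) ℝ} {α : Fin n →₀ ℕ}
    (hα : α ∈ DelSet d p) : p.coeff α ≠ 0 := by
  rw [DelSet, mem_pfilter, OmegaSet, mem_pfilter, mem_support_iff] at hα
  exact hα.1.1

lemma coe_sub_lwObj_le_lwGp {p : MvPolynomial (Fin n) ℝ}
    {z : (Fin n →₀ ℕ) → Fin n → ℝ} (hz : LwFeas d p z) :
    ((eval 0 p - lwObj d p z : ℝ) : EReal) ≤ lwGp d p := by
  rw [EReal.coe_sub, lwGp]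
  exact EReal.sub_le_sub le_rfl (sInf_le ⟨z, hz, rfl⟩)

lemma coeff_polyG (f : MvPolynomial (Fin n) ℝ) (g : Fin m → MvPolynomial (Fin n) ℝ)
    (lam : Fin m → ℝ) (α : Fin n →₀ ℕ) :
    (polyG f g lam).coeff α = f.coeff α - ∑ j, lam j * (g j).coeff α := by
  simp [polyG, coeff_sum]

lemma eval_zero_polyG (f : MvPolynomial (Fin n) ℝ) (g : Fin m → MvPolynomial (Fin n) ℝ)
    (lam : Fin m → ℝ) :
    eval 0 (polyG f g lam) = eval 0 f - ∑ j, lam j * eval 0 (g j) := by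
  simp [polyG]

lemma DelSet_polyG_subset_DelTot {f : MvPolynomial (Fin n) ℝ}
    {g : Fin m → MvPolynomial (Fin n) ℝ} (lam : Fin m → ℝ)
    (hOf : OmegaSet d f = DelSet d f) (hOg : ∀ j, OmegaSet d (-(g j)) = DelSet d (-(g j))) :
    DelSet d (polyG f g lam) ⊆ DelTot d f g := by
  intro α hα
  obtain ⟨hG, hdeg⟩ := (mem_pfilter.mp (mem_pfilter.mp hα).1)
  rw [mem_support_iff, coeff_polyG] at hG
  by_cases hf : f.coeff α = 0
  · obtain ⟨j, hj⟩ : ∃ j, (g j).coeff α ≠ 0 := by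
      by_contra! hg
      simp [hf, hg] at hG
    refine mem_union_right _ (mem_biUnion.mpr ⟨j, mem_univ j, ?_⟩)
    rw [← hOg j, OmegaSet, mem_pfilter, mem_support_iff, coeff_neg, neg_ne_zero]
    exact ⟨hj, hdeg⟩
  · refine mem_union_left _ ?_
    rw [← hOf, OmegaSet, mem_pfilter, mem_support_iff]
    exact ⟨hf, hdeg⟩

def shrinkFactor (d : ℕ) (p : MvPolynomial (Fin n) ℝ) (z : (Fin n →₀ ℕ) → Fin n → ℝ)
    (α : Fin n →₀ ℕ) : ℝ :=
  if adeg α = d then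
    ((p.coeff α / d) ^ d / ∏ i, (z α i / α i) ^ α i) ^ ((d : ℝ)⁻¹)
  else 1

variable {p : MvPolynomial (Fin n) ℝ} {z : (Fin n →₀ ℕ) → Fin n → ℝ}
  {α : Fin n →₀ ℕ}

lemma shrinkFactor_of_adeg_ne (h : adeg α ≠ d) : shrinkFactor d p z α = 1 :=
  if_neg h

lemma shrinkFactor_pos_le_one (hd : 0 < d) (hde : Even d) (hα : p.coeff α ≠ 0)
    (hL : 0 < ∏ i, (z α i / α i) ^ α i)
    (hle : adeg α = d → (p.coeff α / d) ^ d ≤ ∏ i, (z α i / α i) ^ α i) :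
    0 < shrinkFactor d p z α ∧ shrinkFactor d p z α ≤ 1 := by
  by_cases hαd : adeg α = d
  · have hR : 0 < (p.coeff α / d) ^ d :=
      hde.pow_pos (div_ne_zero hα (Nat.cast_ne_zero.mpr hd.ne'))
    rw [shrinkFactor, if_pos hαd]
    exact ⟨by positivity,
      Real.rpow_le_one (by positivity) ((div_le_one hL).mpr (hle hαd)) (by positivity)⟩
  · rw [shrinkFactor_of_adeg_ne hαd]
    exact ⟨one_pos, le_rfl⟩

lemma prod_shrinkFactor_mul (hd : 0 < d) (hde : Even d) (hαd : adeg α = d)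
    (hL : 0 < ∏ i, (z α i / α i) ^ α i) :
    ∏ i, (shrinkFactor d p z α * z α i / α i) ^ α i = (p.coeff α / d) ^ d := by
  rw [prod_mul_div_pow, hαd, shrinkFactor, if_pos hαd,
    Real.rpow_inv_natCast_pow (div_nonneg (hde.pow_nonneg _) hL.le) hd.ne',
    div_mul_cancel₀ _ hL.ne']

end Lw

section Lw1

variable {n m d : ℕ} {f : MvPolynomial (Fin n) ℝ} {g : Fin m → MvPolynomial (Fin n) ℝ}
  {z : (Fin n →₀ ℕ) → Fin n → ℝ} {lam : Fin m → ℝ}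

lemma lwFeas_shrinkFactor_mul (hd : 0 < d) (hde : Even d)
    (hOf : OmegaSet d f = DelSet d f) (hOg : ∀ j, OmegaSet d (-(g j)) = DelSet d (-(g j)))
    (h : Lw1Feas d f g z lam) :
    LwFeas d (polyG f g lam) (fun α i => shrinkFactor d (polyG f g lam) z α * z α i) := by
  obtain ⟨-, hz, hbud, hcon⟩ := h
  have hsub := DelSet_polyG_subset_DelTot lam hOf hOg
  have hL : ∀ α ∈ DelSet d (polyG f g lam), 0 < ∏ i, (z α i / α i) ^ α i :=
    fun α hα => prod_div_pow_pos (hz α (hsub hα))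
  have hc : ∀ α ∈ DelSet d (polyG f g lam),
      0 < shrinkFactor d (polyG f g lam) z α ∧ shrinkFactor d (polyG f g lam) z α ≤ 1 :=
    fun α hα => shrinkFactor_pos_le_one hd hde (coeff_ne_zero_of_mem_DelSet hα) (hL α hα)
      (hcon α (hsub hα))
  refine ⟨fun α hα i => ?_, fun i => ?_,
    fun α hα hαd => prod_shrinkFactor_mul hd hde hαd (hL α hα)⟩
  · obtain ⟨hz0, hzα⟩ := hz α (hsub hα) i
    refine ⟨mul_nonneg (hc α hα).1.le hz0, ?_⟩
    rw [mul_eq_zero, or_iff_right (hc α hα).1.ne', hzα]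
  · calc ∑ α ∈ DelSet d (polyG f g lam), shrinkFactor d (polyG f g lam) z α * z α i
        ≤ ∑ α ∈ DelSet d (polyG f g lam), z α i :=
          sum_le_sum fun α hα => mul_le_of_le_one_left (hz α (hsub hα) i).1 (hc α hα).2
      _ ≤ ∑ α ∈ DelTot d f g, z α i :=
          sum_le_sum_of_subset_of_nonneg hsub fun α hα _ => (hz α hα i).1
      _ ≤ _ := hbud i

lemma lwObj_add_le_lw1Obj (hde : Even d)
    (hOf : OmegaSet d f = DelSet d f) (hOg : ∀ j, OmegaSet d (-(g j)) = DelSet d (-(g j)))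
    (h : Lw1Feas d f g z lam) {z' : (Fin n →₀ ℕ) → Fin n → ℝ}
    (hz' : ∀ α, adeg α < d → z' α = z α) :
    lwObj d (polyG f g lam) z' + ∑ j, lam j * eval 0 (g j) ≤ lw1Obj d f g z lam := by
  rw [lw1Obj, lwObj, add_comm]
  gcongr _ + ?_
  rw [sum_congr rfl fun α hα => by rw [hz' α (mem_pfilter.mp hα).2]]
  refine sum_le_sum_of_subset_of_nonneg ?_ fun α hα _ => ?_
  · intro α hα
    rw [mem_pfilter] at hα ⊢
    exact ⟨DelSet_polyG_subset_DelTot lam hOf hOg hα.1, hα.2⟩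
  · obtain ⟨hαΔ, hαd⟩ := mem_pfilter.mp hα
    have hdα : (adeg α : ℝ) < d := by exact_mod_cast hαd
    have hz := h.2.1 α hαΔ
    refine mul_nonneg (by linarith) (Real.rpow_nonneg (mul_nonneg (hde.pow_nonneg _) ?_) _)
    exact prod_nonneg fun i _ => pow_nonneg (div_nonneg (Nat.cast_nonneg _) (hz i).1) _

lemma exists_lwFeas_and_coe_sub_lw1Obj_le_lwGp (hd : 0 < d) (hde : Even d)
    (hOf : OmegaSet d f = DelSet d f) (hOg : ∀ j, OmegaSet d (-(g j)) = DelSet d (-(g j)))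
    (h : Lw1Feas d f g z lam) :
    (∃ z', LwFeas d (polyG f g lam) z') ∧
      ((eval 0 f - lw1Obj d f g z lam : ℝ) : EReal) ≤ lwGp d (polyG f g lam) := by
  have hfeas := lwFeas_shrinkFactor_mul hd hde hOf hOg h
  refine ⟨⟨_, hfeas⟩, le_trans ?_ (coe_sub_lwObj_le_lwGp hfeas)⟩
  have hobj := lwObj_add_le_lw1Obj hde hOf hOg h
    (z' := fun α i => shrinkFactor d (polyG f g lam) z α * z α i)
    fun α hα => by simp only [shrinkFactor_of_adeg_ne hα.ne, one_mul]
  rw [EReal.coe_le_coe_iff, eval_zero_polyG]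
  linarith

end Lw1

theorem stmt4_general {n m : ℕ} (d : ℕ)
    (f : MvPolynomial (Fin n) ℝ) (g : Fin m → MvPolynomial (Fin n) ℝ)
    (hd2 : 2 ≤ d) (hde : Even d)
    (hOf : OmegaSet d f = DelSet d f)
    (hOg : ∀ j, OmegaSet d (-(g j)) = DelSet d (-(g j))) :
    (∀ z lam, Lw1Feas d f g z lam →
      (∃ z', LwFeas d (polyG f g lam) z') ∧
      (((eval (0 : Fin n → ℝ) f - lw1Obj d f g z lam : ℝ) : EReal) ≤
        lwGp d (polyG f g lam))) ∧
    ((eval (0 : Fin n → ℝ) f : ℝ) : EReal) - rho1 d f g ≤ sBound d f g := by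
  have hfeas := fun z lam =>
    exists_lwFeas_and_coe_sub_lw1Obj_le_lwGp (z := z) (lam := lam) (by omega) hde hOf hOg
  refine ⟨hfeas, EReal.coe_sub_sInf_le ?_⟩
  rintro _ ⟨⟨z, lam⟩, h, rfl⟩
  rw [← EReal.coe_sub]
  exact (hfeas z lam h).2.trans (le_sSup ⟨lam, h.1, rfl⟩)

/-- For every feasible point `(z,λ)` of (lw1), the program (lw) for `G(λ)` is feasible and
`f(0) − u(z,λ) ≤ G(λ)_gp`; consequently `f(0) − ρ ≤ s(f,g)`. -/
theorem stmt4 {n m : ℕ} (hn : 1 ≤ n) (d : ℕ)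
    (f : MvPolynomial (Fin n) ℝ) (g : Fin m → MvPolynomial (Fin n) ℝ)
    (hd2 : 2 ≤ d) (hde : Even d) (hdf : f.totalDegree ≤ d)
    (hdg : ∀ j, (g j).totalDegree ≤ d)
    (hdLeast : ∀ d' : ℕ, Even d' → 2 ≤ d' → f.totalDegree ≤ d' →
      (∀ j, (g j).totalDegree ≤ d') → d ≤ d')
    (hOf : OmegaSet d f = DelSet d f)
    (hOg : ∀ j, OmegaSet d (-(g j)) = DelSet d (-(g j))) :
    (∀ z lam, Lw1Feas d f g z lam →
      (∃ z', LwFeas d (polyG f g lam) z') ∧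
      (((eval (0 : Fin n → ℝ) f - lw1Obj d f g z lam : ℝ) : EReal) ≤
        lwGp d (polyG f g lam))) ∧
    ((eval (0 : Fin n → ℝ) f : ℝ) : EReal) - rho1 d f g ≤ sBound d f g :=
  stmt4_general d f g hd2 hde hOf hOg
end
end
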